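/- For any b ≥ 0, the set {(c, e) ∈ ℝ³ × ℝ³ : c · e = 0 and ‖c‖ > b} (with subspace topology from ℝ⁶) is homeomorphic to the product of the tangent bundle of the 2-sphere with the open interval (b, ∞). -/

import Mathlib

noncomputable abbrev E3 := EuclideanSpace ℝ (Fin 3)

/-- The tangent bundle of the unit 2-sphere, realized in ℝ³ × ℝ³. -/
def TS2 : Set (E3 × E3) := {x | ‖x.1‖ = 1 ∧ inner ℝ x.1 x.2 = (0 : ℝ)}

/-- The space of curvilinear Keplerian orbits with angular momentum greater than b. -/
def Horb (b : ℝ) : Set (E3 × E3) := {x | inner ℝ x.1 x.2 = (0 : ℝ) ∧ ‖x.1‖ > b}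

/-!
Polar decomposition of the angular momentum: `(c, e) ↦ ((c / ‖c‖, e), ‖c‖)`. Rescaling `c` by a
positive factor preserves the condition `c ⊥ e`, and `‖c‖ > b ≥ 0` keeps `c` away from `0`, where
the normalization `c / ‖c‖` is continuous.
-/

open Set

section PolarDecomposition

abbrev orthogonalPairsNormGT (E : Type*) [NormedAddCommGroup E] [InnerProductSpace ℝ E] (b : ℝ) :
    Set (E × E) :=
  {x | inner ℝ x.1 x.2 = (0 : ℝ) ∧ b < ‖x.1‖}

abbrev unitSphereTangentBundle (E : Type*) [NormedAddCommGroup E] [InnerProductSpace ℝ E] :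
    Set (E × E) :=
  {x | ‖x.1‖ = 1 ∧ inner ℝ x.1 x.2 = (0 : ℝ)}

variable {E : Type*} [NormedAddCommGroup E] [InnerProductSpace ℝ E]

theorem real_inner_smul_left_eq_zero {c e : E} (h : inner ℝ c e = (0 : ℝ)) (r : ℝ) :
    inner ℝ (r • c) e = (0 : ℝ) := by
  rw [real_inner_smul_left, h, mul_zero]

theorem norm_smul_of_norm_eq_one {r : ℝ} (hr : 0 ≤ r) {u : E} (hu : ‖u‖ = 1) : ‖r • u‖ = r := by
  rw [norm_smul_of_nonneg hr, hu, mul_one]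

variable {b : ℝ}

theorem ne_zero_of_mem_orthogonalPairsNormGT (hb : 0 ≤ b) (x : orthogonalPairsNormGT E b) :
    (x : E × E).1 ≠ 0 :=
  norm_pos_iff.mp (hb.trans_lt x.2.2)

noncomputable def orthogonalPairsPolarHomeomorph (hb : 0 ≤ b) :
    orthogonalPairsNormGT E b ≃ₜ unitSphereTangentBundle E × Ioi b where
  toFun x :=
    (⟨(‖(x : E × E).1‖⁻¹ • (x : E × E).1, (x : E × E).2),
        norm_smul_inv_norm (ne_zero_of_mem_orthogonalPairsNormGT hb x),
        real_inner_smul_left_eq_zero x.2.1 _⟩,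
      ⟨‖(x : E × E).1‖, x.2.2⟩)
  invFun y :=
    ⟨((y.2 : ℝ) • (y.1 : E × E).1, (y.1 : E × E).2),
      real_inner_smul_left_eq_zero y.1.2.2 _,
      by rw [norm_smul_of_norm_eq_one (hb.trans y.2.2.le) y.1.2.1]; exact y.2.2⟩
  left_inv x := by
    have hc := norm_ne_zero_iff.mpr (ne_zero_of_mem_orthogonalPairsNormGT hb x)
    ext1
    simp only [smul_smul, mul_inv_cancel₀ hc, one_smul]
  right_inv y := by
    have hr : 0 < (y.2 : ℝ) := hb.trans_lt y.2.2
    have hnorm := norm_smul_of_norm_eq_one hr.le y.1.2.1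
    refine Prod.ext (Subtype.ext (Prod.ext ?_ rfl)) (Subtype.ext hnorm)
    change ‖(y.2 : ℝ) • (y.1 : E × E).1‖⁻¹ • (y.2 : ℝ) • (y.1 : E × E).1 = (y.1 : E × E).1
    rw [hnorm, smul_smul, inv_mul_cancel₀ hr.ne', one_smul]
  continuous_toFun := by
    have hc : Continuous fun x : orthogonalPairsNormGT E b => (x : E × E).1 := by fun_prop
    have hnorm := continuous_norm.comp hc
    refine .prodMk (.subtype_mk (.prodMk ?_ (by fun_prop)) _) (hnorm.subtype_mk _)
    exact (hnorm.inv₀ fun x => norm_ne_zero_iff.mpr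
      (ne_zero_of_mem_orthogonalPairsNormGT hb x)).smul hc
  continuous_invFun := by fun_prop

end PolarDecomposition

theorem stmt0 (b : ℝ) (hb : 0 ≤ b) :
    Nonempty (Horb b ≃ₜ TS2 × Set.Ioi b) :=
  ⟨orthogonalPairsPolarHomeomorph hb⟩
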